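/- Let N be a nonnegative-integer-valued random variable with E[(1+ε)^N] < ∞ for every ε > 0, independent of an i.i.d. sequence X₁, X₂, … with subexponential distribution F. Then P[X₁+⋯+X_N > x] ∼ E[N]·(1-F(x)) as x → ∞. -/

import Mathlib

/-!
Conditioning on `N` gives `P[S_N > x] = ∑ₙ P[N = n] F̄^{*n}(x)`, and `F̄^{*n}(x) / F̄(x) → n` for
every `n` (by subexponentiality for `n ≥ 2`, trivially for `n ≤ 1`). Dominated convergence turns
this into `∑ₙ n P[N = n] = E[N]`, provided the ratios are bounded uniformly in `x` by `C 3ⁿ`, which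
is summable against `P[N = n]` because `E[3^N] < ∞`.

The bound is a Kesten-type induction on the convolution identity
`F̄^{*(n+1)}(x) = F̄(x) + ∫_{t ≤ x} F̄^{*n}(x - t) dF(t)`: beyond a point `T` where `F̄^{*2} ≤ 3 F̄`,
its case `n = 1` gives `∫_{t ≤ x} F̄(x - t) dF(t) ≤ 2 F̄(x)`, and below `T` the trivial bound `1`
is at most `F̄(x) / F̄(T)`.
-/

open MeasureTheory ProbabilityTheory Filter Set Asymptotics
open scoped Classical
open scoped ENNReal

/-- Tail of a distribution (measure) on `ℝ`: `F̄(x) = μ(x,∞)`. -/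
noncomputable def tailP (μ : Measure ℝ) (x : ℝ) : ℝ := (μ (Set.Ioi x)).toReal

/-- Tail of the `n`-fold convolution: `P[X₁+⋯+Xₙ > x]` for i.i.d. `Xᵢ ∼ μ`. -/
noncomputable def convTail (μ : Measure ℝ) (n : ℕ) (x : ℝ) : ℝ :=
  ((Measure.pi fun _ : Fin n => μ) {y | x < ∑ i, y i}).toReal

/-- A probability distribution on `(0,∞)` is subexponential if
`(1-F^{*n}(x))/(1-F(x)) → n` for all `n ≥ 2`. -/
def Subexponential (μ : Measure ℝ) : Prop :=
  IsProbabilityMeasure μ ∧ μ (Set.Ioi 0) = 1 ∧ (∀ x : ℝ, 0 < tailP μ x) ∧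
    ∀ n : ℕ, 2 ≤ n →
      Tendsto (fun x => convTail μ n x / tailP μ x) atTop (nhds (n : ℝ))

noncomputable def convTailENNReal (μ : Measure ℝ) (n : ℕ) (x : ℝ) : ℝ≥0∞ :=
  (Measure.pi fun _ : Fin n => μ) {y | x < ∑ i, y i}

@[simp]
lemma toReal_convTailENNReal (μ : Measure ℝ) (n : ℕ) (x : ℝ) :
    (convTailENNReal μ n x).toReal = convTail μ n x := rfl

@[simp]
lemma toReal_measure_Ioi (μ : Measure ℝ) (x : ℝ) : (μ (Ioi x)).toReal = tailP μ x := rfl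

section

variable {μ : Measure ℝ}

lemma measurableSet_lt_sum (n : ℕ) (x : ℝ) : MeasurableSet {y : Fin n → ℝ | x < ∑ i, y i} :=
  measurableSet_lt measurable_const (by fun_prop)

lemma convTailENNReal_zero (x : ℝ) :
    convTailENNReal μ 0 x = (Iio 0).indicator 1 x := by
  by_cases hx : x < 0 <;> simp [convTailENNReal, hx]

lemma convTailENNReal_succ [SigmaFinite μ] (n : ℕ) (x : ℝ) :
    convTailENNReal μ (n + 1) x = ∫⁻ t, convTailENNReal μ n (x - t) ∂μ := by
  have he := (measurePreserving_piFinSuccAbove (fun _ : Fin (n + 1) => μ) 0).symm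
  rw [convTailENNReal, ← he.measure_preimage (measurableSet_lt_sum _ _).nullMeasurableSet,
    Measure.prod_apply]
  · congr with t
    simp [convTailENNReal, Fin.sum_univ_succ, sub_lt_iff_lt_add']
  · exact (measurableSet_lt_sum _ _).preimage he.measurable

lemma convTailENNReal_one [SigmaFinite μ] (x : ℝ) : convTailENNReal μ 1 x = μ (Ioi x) := by
  have h : ∀ t, (Iio (0 : ℝ)).indicator 1 (x - t) = (Ioi x).indicator (1 : ℝ → ℝ≥0∞) t := by
    intro t
    simp [Set.indicator_apply, sub_neg]
  simp_rw [convTailENNReal_succ, convTailENNReal_zero, h, lintegral_indicator_one measurableSet_Ioi]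

variable [IsProbabilityMeasure μ]

lemma convTailENNReal_of_neg (h0 : ∀ᵐ t ∂μ, 0 ≤ t) (n : ℕ) {x : ℝ} (hx : x < 0) :
    convTailENNReal μ n x = 1 := by
  induction n generalizing x with
  | zero => simp [convTailENNReal_zero, hx]
  | succ n ih =>
    rw [convTailENNReal_succ, lintegral_congr_ae (h0.mono fun t ht => ih (by linarith)),
      lintegral_const, measure_univ, one_mul]

lemma convTailENNReal_succ_eq_add (h0 : ∀ᵐ t ∂μ, 0 ≤ t) (n : ℕ) (x : ℝ) :
    convTailENNReal μ (n + 1) x = μ (Ioi x) + ∫⁻ t in Iic x, convTailENNReal μ n (x - t) ∂μ := by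
  have htail : ∫⁻ t in Ioi x, convTailENNReal μ n (x - t) ∂μ = μ (Ioi x) := by
    rw [setLIntegral_congr_fun measurableSet_Ioi
      (fun t ht => convTailENNReal_of_neg h0 n (sub_neg.2 ht)), setLIntegral_const, one_mul]
  rw [convTailENNReal_succ, ← lintegral_add_compl _ measurableSet_Iic, compl_Iic, htail, add_comm]

theorem convTailENNReal_le_mul_pow (h0 : ∀ᵐ t ∂μ, 0 ≤ t) {T : ℝ} (hT0 : μ (Ioi T) ≠ 0)
    (hT : ∀ x, T ≤ x → convTailENNReal μ 2 x ≤ 3 * μ (Ioi x)) (n : ℕ) (x : ℝ) :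
    convTailENNReal μ n x ≤ (μ (Ioi T))⁻¹ * 3 ^ n * μ (Ioi x) := by
  set C := (μ (Ioi T))⁻¹
  have hC : 1 ≤ C := ENNReal.one_le_inv.2 prob_le_one
  have hsmall : ∀ n, ∀ x < T, convTailENNReal μ n x ≤ C * 3 ^ n * μ (Ioi x) := by
    intro n x hx
    calc convTailENNReal μ n x ≤ C * μ (Ioi T) := by
          rw [ENNReal.inv_mul_cancel hT0 (measure_ne_top _ _)]; exact prob_le_one
      _ ≤ C * μ (Ioi x) := by gcongr
      _ ≤ C * 3 ^ n * μ (Ioi x) := by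
          gcongr; exact le_mul_of_one_le_right' (one_le_pow₀ (by norm_num))
  induction n generalizing x with
  | zero =>
    rw [convTailENNReal_zero, pow_zero, mul_one]
    by_cases hx : x < 0
    · rw [← convTailENNReal_one, convTailENNReal_of_neg h0 1 hx]
      simpa [hx] using hC
    · simp [hx]
  | succ n ih =>
    rcases lt_or_ge x T with hx | hx
    · exact hsmall _ x hx
    have hJ : ∫⁻ t in Iic x, μ (Ioi (x - t)) ∂μ ≤ 2 * μ (Ioi x) := by
      have h2 := hT x hx
      rw [convTailENNReal_succ_eq_add h0, show (3 : ℝ≥0∞) = 1 + 2 by norm_num, add_mul, one_mul,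
        ENNReal.add_le_add_iff_left (measure_ne_top _ _)] at h2
      simpa only [convTailENNReal_one] using h2
    calc convTailENNReal μ (n + 1) x
        = μ (Ioi x) + ∫⁻ t in Iic x, convTailENNReal μ n (x - t) ∂μ :=
          convTailENNReal_succ_eq_add h0 n x
      _ ≤ μ (Ioi x) + ∫⁻ t in Iic x, C * 3 ^ n * μ (Ioi (x - t)) ∂μ := by
          gcongr with t; exact ih _
      _ = μ (Ioi x) + C * 3 ^ n * ∫⁻ t in Iic x, μ (Ioi (x - t)) ∂μ := by
          rw [lintegral_const_mul' _ _ (by finiteness)]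
      _ ≤ C * 3 ^ n * μ (Ioi x) + C * 3 ^ n * (2 * μ (Ioi x)) := by
          gcongr
          exact le_mul_of_one_le_left' (one_le_mul hC (one_le_pow₀ (by norm_num)))
      _ = C * 3 ^ (n + 1) * μ (Ioi x) := by ring

end

namespace Subexponential

variable {μ : Measure ℝ} (hμ : Subexponential μ)
include hμ

lemma tailP_pos (x : ℝ) : 0 < tailP μ x := hμ.2.2.1 x

lemma ae_nonneg : ∀ᵐ t ∂μ, 0 ≤ t := by
  have := hμ.1
  exact ((ae_iff_measure_eq measurableSet_Ioi.nullMeasurableSet).2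
    (by rw [measure_univ]; exact hμ.2.1)).mono fun _ => le_of_lt

theorem tendsto_convTail_div_tailP (n : ℕ) :
    Tendsto (fun x => convTail μ n x / tailP μ x) atTop (nhds (n : ℝ)) := by
  have := hμ.1
  match n with
  | 0 =>
    refine tendsto_const_nhds.congr' ?_
    filter_upwards [eventually_ge_atTop 0] with x hx
    simp [← toReal_convTailENNReal, convTailENNReal_zero, not_lt.2 hx]
  | 1 =>
    refine tendsto_const_nhds.congr fun x => ?_
    rw [← toReal_convTailENNReal, convTailENNReal_one, toReal_measure_Ioi,
      div_self (hμ.tailP_pos x).ne', Nat.cast_one]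
  | n + 2 => exact hμ.2.2.2 (n + 2) le_add_self

theorem exists_convTail_div_tailP_le :
    ∃ C : ℝ, ∀ n x, convTail μ n x / tailP μ x ≤ C * 3 ^ n := by
  have := hμ.1
  obtain ⟨T, hT⟩ := eventually_atTop.1
    ((hμ.2.2.2 2 le_rfl).eventually_lt_const (show ((2 : ℕ) : ℝ) < 3 by norm_num))
  have hT' : ∀ x, T ≤ x → convTailENNReal μ 2 x ≤ 3 * μ (Ioi x) := by
    intro x hx
    have h := (div_lt_iff₀ (hμ.tailP_pos x)).1 (hT x hx)
    rw [← ENNReal.toReal_le_toReal (a := convTailENNReal μ 2 x) (measure_ne_top _ _)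
      (by finiteness)]
    simpa [ENNReal.toReal_mul] using h.le
  refine ⟨(μ (Ioi T))⁻¹.toReal, fun n x => ?_⟩
  have hT0 : μ (Ioi T) ≠ 0 := (ENNReal.toReal_pos_iff.1 (hμ.tailP_pos T)).1.ne'
  have h := ENNReal.toReal_mono (by finiteness [ENNReal.inv_ne_top.2 hT0])
    (convTailENNReal_le_mul_pow hμ.ae_nonneg hT0 hT' n x)
  rw [div_le_iff₀ (hμ.tailP_pos x)]
  simpa [ENNReal.toReal_mul] using h

end Subexponential

section RandomSum

variable {Ω : Type*} [MeasurableSpace Ω] {P : Measure Ω}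

theorem ProbabilityTheory.IndepFun.measure_mem_eq_tsum {β : Type*} [MeasurableSpace β]
    {N : Ω → ℕ} {Y : Ω → β} (hN : Measurable N) (hY : Measurable Y) (hNY : IndepFun N Y P) {A : ℕ → Set β}
    (hA : ∀ n, MeasurableSet (A n)) :
    P {ω | Y ω ∈ A (N ω)} = ∑' n, P (N ⁻¹' {n}) * P (Y ⁻¹' A n) := by
  have hunion : {ω | Y ω ∈ A (N ω)} = ⋃ n, N ⁻¹' {n} ∩ Y ⁻¹' A n := by
    ext ω; simp
  rw [hunion, measure_iUnion]
  · exact tsum_congr fun n =>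
      hNY.measure_inter_preimage_eq_mul _ _ (measurableSet_singleton n) (hA n)
  · exact fun m n hmn => Disjoint.mono inter_subset_left inter_subset_left
      ((disjoint_singleton.2 hmn).preimage N)
  · exact fun n => (hN (measurableSet_singleton n)).inter (hY (hA n))

theorem ProbabilityTheory.iIndepFun.map_fin_eq_pi {β : Type*} [MeasurableSpace β]
    {μ : Measure β} {X : ℕ → Ω → β} (hX : ∀ i, AEMeasurable (X i) P) (hindep : iIndepFun X P)
    (hlaw : ∀ i, P.map (X i) = μ) (n : ℕ) :
    P.map (fun ω (i : Fin n) => X i ω) = Measure.pi fun _ => μ := by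
  rw [iIndepFun.map_fun_eq_pi_map (fun i : Fin n => hX i) (hindep.precomp Fin.val_injective)]
  simp only [hlaw]

lemma measure_lt_sum_range_eq_convTailENNReal {μ : Measure ℝ} {X : ℕ → Ω → ℝ}
    (hX : ∀ i, Measurable (X i)) (hindep : iIndepFun X P) (hlaw : ∀ i, P.map (X i) = μ)
    (n : ℕ) (x : ℝ) :
    P {ω | x < ∑ i ∈ Finset.range n, X i ω} = convTailENNReal μ n x := by
  have hY : Measurable fun ω (i : Fin n) => X i ω := measurable_pi_lambda _ fun i => hX i
  rw [convTailENNReal, ← iIndepFun.map_fin_eq_pi (fun i => (hX i).aemeasurable) hindep hlaw n,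
    Measure.map_apply hY (measurableSet_lt_sum n x)]
  congr with ω
  simp [Fin.sum_univ_eq_sum_range (fun i => X i ω)]

theorem measure_lt_randomSum_eq_tsum {μ : Measure ℝ} {N : Ω → ℕ} {X : ℕ → Ω → ℝ}
    (hN : Measurable N) (hX : ∀ i, Measurable (X i)) (hindep : iIndepFun X P)
    (hlaw : ∀ i, P.map (X i) = μ) (hNX : IndepFun N (fun ω i => X i ω) P) (x : ℝ) :
    P {ω | x < ∑ i ∈ Finset.range (N ω), X i ω} =
      ∑' n, P (N ⁻¹' {n}) * convTailENNReal μ n x := by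
  refine (hNX.measure_mem_eq_tsum hN (measurable_pi_lambda _ hX)
    (A := fun n => {f : ℕ → ℝ | x < ∑ i ∈ Finset.range n, f i})
    fun n => measurableSet_lt measurable_const (by fun_prop)).trans (tsum_congr fun n => ?_)
  rw [← measure_lt_sum_range_eq_convTailENNReal hX hindep hlaw]
  rfl

theorem measureReal_lt_randomSum_eq_tsum [IsFiniteMeasure P] {μ : Measure ℝ} [IsFiniteMeasure μ]
    {N : Ω → ℕ} {X : ℕ → Ω → ℝ} (hN : Measurable N) (hX : ∀ i, Measurable (X i))
    (hindep : iIndepFun X P) (hlaw : ∀ i, P.map (X i) = μ)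
    (hNX : IndepFun N (fun ω i => X i ω) P) (x : ℝ) :
    P.real {ω | x < ∑ i ∈ Finset.range (N ω), X i ω} =
      ∑' n, P.real (N ⁻¹' {n}) * convTail μ n x := by
  rw [measureReal_def, measure_lt_randomSum_eq_tsum hN hX hindep hlaw hNX x,
    ENNReal.tsum_toReal_eq (f := fun n => P (N ⁻¹' {n}) * convTailENNReal μ n x)
      fun n => ENNReal.mul_ne_top (measure_ne_top _ _) (measure_ne_top _ _)]
  simp_rw [ENNReal.toReal_mul, toReal_convTailENNReal, measureReal_def]

lemma summable_measureReal_preimage_mul {N : Ω → ℕ} (hN : Measurable N) {f : ℕ → ℝ}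
    (hf : Integrable (fun ω => f (N ω)) P) :
    Summable fun n => P.real (N ⁻¹' {n}) * f n := by
  have hfin := hf.hasFiniteIntegral
  rw [HasFiniteIntegral, ← lintegral_map (f := fun n => ‖f n‖ₑ) (by fun_prop) hN,
    lintegral_countable'] at hfin
  refine Summable.of_norm ((ENNReal.summable_toReal hfin.ne).congr fun n => ?_)
  rw [Measure.map_apply hN (measurableSet_singleton n), ENNReal.toReal_mul, norm_mul,
    Real.norm_of_nonneg measureReal_nonneg, toReal_enorm, measureReal_def, mul_comm]

lemma integral_comp_nat_eq_tsum {N : Ω → ℕ} (hN : Measurable N) {f : ℕ → ℝ}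
    (hf : Integrable (fun ω => f (N ω)) P) :
    ∫ ω, f (N ω) ∂P = ∑' n, P.real (N ⁻¹' {n}) * f n := by
  rw [← integral_map hN.aemeasurable (by fun_prop),
    integral_countable ((integrable_map_measure (by fun_prop) hN.aemeasurable).2 hf)]
  simp_rw [map_measureReal_apply hN (measurableSet_singleton _), smul_eq_mul]

end RandomSum

/-- if `E[(1+ε)^N] < ∞` for all `ε > 0` and `N` is independent of the i.i.d.
subexponential sequence `X₁, X₂, …`, then `P[X₁+⋯+X_N > x] ∼ E[N]·(1-F(x))` as `x → ∞`. -/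
theorem random_sum_tail_asymp
    {Ω : Type} [MeasurableSpace Ω] (P : Measure Ω) [IsProbabilityMeasure P]
    (μ : Measure ℝ) (hμ : Subexponential μ)
    (N : Ω → ℕ) (hNmeas : Measurable N)
    (hpgf : ∀ ε : ℝ, 0 < ε → Integrable (fun ω => (1 + ε) ^ N ω) P)
    (X : ℕ → Ω → ℝ) (hmeas : ∀ i, Measurable (X i))
    (hindep : iIndepFun X P)
    (hlaw : ∀ i, Measure.map (X i) P = μ)
    (hNindep : IndepFun N (fun ω => fun i => X i ω) P) :
    Tendsto (fun x =>
        (P {ω | x < ∑ i ∈ Finset.range (N ω), X i ω}).toReal / tailP μ x)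
      atTop (nhds (∫ ω, (N ω : ℝ) ∂P)) := by
  have := hμ.1
  obtain ⟨C, hC⟩ := hμ.exists_convTail_div_tailP_le
  have h3 : Integrable (fun ω => (3 : ℝ) ^ N ω) P := by
    simpa [show (1 : ℝ) + 2 = 3 by norm_num] using hpgf 2 two_pos
  have hNint : Integrable (fun ω => (N ω : ℝ)) P :=
    h3.mono' (by fun_prop) (ae_of_all _ fun ω => by
      rw [Real.norm_natCast]; exact_mod_cast (Nat.lt_pow_self (by norm_num : 1 < 3)).le)
  have hratio : ∀ x, (P {ω | x < ∑ i ∈ Finset.range (N ω), X i ω}).toReal / tailP μ x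
      = ∑' n, P.real (N ⁻¹' {n}) * (convTail μ n x / tailP μ x) := fun x => by
    rw [← measureReal_def, measureReal_lt_randomSum_eq_tsum hNmeas hmeas hindep hlaw hNindep x,
      ← tsum_div_const]
    simp_rw [mul_div_assoc]
  simp_rw [hratio, integral_comp_nat_eq_tsum hNmeas hNint]
  refine tendsto_tsum_of_dominated_convergence
    (summable_measureReal_preimage_mul hNmeas (f := fun n => C * 3 ^ n) (h3.const_mul C))
    (fun n => (hμ.tendsto_convTail_div_tailP n).const_mul _) (.of_forall fun x n => ?_)
  have hq : 0 ≤ P.real (N ⁻¹' {n}) := measureReal_nonneg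
  have hconv : 0 ≤ convTail μ n x := ENNReal.toReal_nonneg
  rw [norm_mul, Real.norm_of_nonneg hq, Real.norm_of_nonneg (div_nonneg hconv (hμ.tailP_pos x).le)]
  exact mul_le_mul_of_nonneg_left (hC n x) hq
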